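/- One iteration of the rearrangement algorithm does not increase the relaxed energy: if (φ₁,…,φ_k) ∈ 𝒜_k, ψ_i is a normalized minimizer for λ^α(φ_i), each vertex v is assigned label argmax_j ψ_j(v), and (φ₁⁺,…,φ_k⁺) are the indicators of the resulting label sets, then Σᵢ λ^α(φᵢ⁺) ≤ Σᵢ λ^α(φᵢ). -/

import Mathlib

open Finset

/-- Dirichlet energy (gradient) form: `(1/2) ∑_{i,j} w_{ij} (ψ_i - ψ_j)²`. -/
noncomputable def gradE {n : ℕ} (w : Fin n → Fin n → ℝ) (ψ : Fin n → ℝ) : ℝ :=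
  (1 / 2) * ∑ i, ∑ j, w i j * (ψ i - ψ j) ^ 2

/-- Weighted squared norm `∑ i, d_i^r ψ_i²`. -/
noncomputable def dnorm {n : ℕ} (d : Fin n → ℝ) (r : ℝ) (ψ : Fin n → ℝ) : ℝ :=
  ∑ i, Real.rpow (d i) r * ψ i ^ 2

/-- First Dirichlet eigenvalue of the subset `S`. -/
noncomputable def dirEig {n : ℕ} (w : Fin n → Fin n → ℝ) (d : Fin n → ℝ) (r : ℝ)
    (S : Finset (Fin n)) : ℝ :=
  sInf { e : ℝ | ∃ ψ : Fin n → ℝ, (∀ i, i ∉ S → ψ i = 0) ∧ dnorm d r ψ = 1 ∧ e = gradE w ψ }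

/-- Relaxed eigenvalue `λ^α(φ)`. -/
noncomputable def lamAlpha {n : ℕ} (w : Fin n → Fin n → ℝ) (d : Fin n → ℝ) (r α : ℝ)
    (φ : Fin n → ℝ) : ℝ :=
  sInf { e : ℝ | ∃ ψ : Fin n → ℝ, dnorm d r ψ = 1 ∧
    e = gradE w ψ + α * ∑ i, Real.rpow (d i) r * (1 - φ i) * ψ i ^ 2 }

/-- Graph Laplacian `Δ_r = D^{-r}(D - W)` applied to `ψ` at vertex `i`. -/
noncomputable def lapApply {n : ℕ} (w : Fin n → Fin n → ℝ) (d : Fin n → ℝ) (r : ℝ)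
    (ψ : Fin n → ℝ) (i : Fin n) : ℝ :=
  Real.rpow (d i) (-r) * (d i * ψ i - ∑ j, w i j * ψ j)

/-- Indicator function of a vertex subset. -/
def ind {n : ℕ} (S : Finset (Fin n)) : Fin n → ℝ := fun i => if i ∈ S then 1 else 0

/-- The admissible class `𝒜_k`. -/
def memA {k n : ℕ} (Φ : Fin k → Fin n → ℝ) : Prop :=
  (∀ i v, 0 ≤ Φ i v ∧ Φ i v ≤ 1) ∧ ∀ v, ∑ i, Φ i v = 1

/-- The relaxed partition energy `Λ^α_k`. -/
noncomputable def LamK {k n : ℕ} (w : Fin n → Fin n → ℝ) (d : Fin n → ℝ) (r α : ℝ)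
    (Φ : Fin k → Fin n → ℝ) : ℝ :=
  ∑ i, lamAlpha w d r α (Φ i)

/-- The weighted graph is connected. -/
def gconn {n : ℕ} (w : Fin n → Fin n → ℝ) : Prop :=
  ∀ i j : Fin n, Relation.ReflTransGen (fun a b => 0 < w a b) i j

/-! Each `ψ i` is an admissible test function for `λ^α(φ⁺ i)`, so `Σ λ^α(φ⁺ i)` is at most the
sum of the energies of the `ψ i` against the new labeling. These differ from the old ones only
in the penalty, and the penalty can only drop: at each vertex `v`, `Σ i, φ i v * ψ i v²` is a convex
combination of the `ψ i v²`, hence at most their maximum `ψ (ℓ v) v² = Σ i, φ⁺ i v * ψ i v²`. -/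

noncomputable def penalty {n : ℕ} (d : Fin n → ℝ) (r : ℝ) (φ ψ : Fin n → ℝ) : ℝ :=
  ∑ v, Real.rpow (d v) r * (1 - φ v) * ψ v ^ 2

noncomputable def relaxedEnergy {n : ℕ} (w : Fin n → Fin n → ℝ) (d : Fin n → ℝ) (r α : ℝ)
    (φ ψ : Fin n → ℝ) : ℝ :=
  gradE w ψ + α * penalty d r φ ψ

section

variable {n : ℕ} {w : Fin n → Fin n → ℝ} {d : Fin n → ℝ} {r α : ℝ}

theorem gradE_nonneg (hw : ∀ i j, 0 ≤ w i j) (ψ : Fin n → ℝ) : 0 ≤ gradE w ψ :=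
  mul_nonneg (by norm_num) <| sum_nonneg fun i _ => sum_nonneg fun j _ =>
    mul_nonneg (hw i j) (sq_nonneg _)

theorem penalty_nonneg (hd : ∀ v, 0 ≤ Real.rpow (d v) r) {φ : Fin n → ℝ} (hφ : ∀ v, φ v ≤ 1)
    (ψ : Fin n → ℝ) : 0 ≤ penalty d r φ ψ :=
  sum_nonneg fun v _ => mul_nonneg (mul_nonneg (hd v) (sub_nonneg.2 (hφ v))) (sq_nonneg _)

theorem lamAlpha_le_relaxedEnergy (hw : ∀ i j, 0 ≤ w i j) (hd : ∀ v, 0 ≤ Real.rpow (d v) r)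
    (hα : 0 ≤ α) {φ : Fin n → ℝ} (hφ : ∀ v, φ v ≤ 1) {ψ : Fin n → ℝ} (hψ : dnorm d r ψ = 1) :
    lamAlpha w d r α φ ≤ relaxedEnergy w d r α φ ψ := by
  refine csInf_le ⟨0, ?_⟩ ⟨ψ, hψ, rfl⟩
  rintro _ ⟨χ, -, rfl⟩
  exact add_nonneg (gradE_nonneg hw χ) (mul_nonneg hα (penalty_nonneg hd hφ χ))

end

theorem sum_mul_le_of_forall_le {ι : Type*} [Fintype ι] {p f : ι → ℝ} {m : ι}
    (hp : ∀ i, 0 ≤ p i) (hp_sum : ∑ i, p i = 1) (hf : ∀ i, f i ≤ f m) :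
    ∑ i, p i * f i ≤ f m :=
  calc ∑ i, p i * f i ≤ ∑ i, p i * f m :=
        sum_le_sum fun i _ => mul_le_mul_of_nonneg_left (hf i) (hp i)
    _ = f m := by rw [← sum_mul, hp_sum, one_mul]

theorem sum_penalty_le_of_argmax {n k : ℕ} {d : Fin n → ℝ} {r : ℝ}
    (hd : ∀ v, 0 ≤ Real.rpow (d v) r) {Φ : Fin k → Fin n → ℝ} (hΦ : memA Φ)
    {ψ : Fin k → Fin n → ℝ} (hψ : ∀ i v, 0 ≤ ψ i v) {ℓ : Fin n → Fin k}
    (hℓ : ∀ v j, ψ j v ≤ ψ (ℓ v) v) :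
    ∑ i, penalty d r (fun v => if ℓ v = i then 1 else 0) (ψ i) ≤ ∑ i, penalty d r (Φ i) (ψ i) := by
  have expand : ∀ Ψ : Fin k → Fin n → ℝ, ∑ i, penalty d r (Ψ i) (ψ i) =
      ∑ v, Real.rpow (d v) r * (∑ i, ψ i v ^ 2 - ∑ i, Ψ i v * ψ i v ^ 2) := fun Ψ => by
    simp only [penalty]
    rw [sum_comm]
    refine sum_congr rfl fun v _ => ?_
    rw [mul_sub, mul_sum, mul_sum, ← sum_sub_distrib]
    exact sum_congr rfl fun i _ => by ring
  rw [expand, expand]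
  refine sum_le_sum fun v _ => mul_le_mul_of_nonneg_left (sub_le_sub_left ?_ _) (hd v)
  have indicator_sum : ∑ i, (if ℓ v = i then (1 : ℝ) else 0) * ψ i v ^ 2 = ψ (ℓ v) v ^ 2 := by
    simp [ite_mul]
  rw [indicator_sum]
  exact sum_mul_le_of_forall_le (fun i => (hΦ.1 i v).1) (hΦ.2 v)
    fun j => pow_le_pow_left₀ (hψ j v) (hℓ v j) 2

theorem rearrangement_step_decreases_general
    (n k : ℕ)
    (w : Fin n → Fin n → ℝ)
    (hnn : ∀ i j, 0 ≤ w i j)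
    (r : ℝ)
    (d : Fin n → ℝ) (hdpos : ∀ i, 0 < d i)
    (α : ℝ) (hα : 0 < α)
    (Φ : Fin k → Fin n → ℝ) (hΦ : memA Φ)
    (ψ : Fin k → Fin n → ℝ)
    (hψpos : ∀ i v, 0 < ψ i v)
    (hψnorm : ∀ i, dnorm d r (ψ i) = 1)
    (hψmin : ∀ i, gradE w (ψ i)
      + α * ∑ v, Real.rpow (d v) r * (1 - Φ i v) * ψ i v ^ 2 = lamAlpha w d r α (Φ i))
    (ℓ : Fin n → Fin k) (hargmax : ∀ v j, ψ j v ≤ ψ (ℓ v) v) :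
    LamK w d r α (fun i v => if ℓ v = i then (1 : ℝ) else 0) ≤ LamK w d r α Φ := by
  have hd v : 0 ≤ Real.rpow (d v) r := (Real.rpow_pos_of_pos (hdpos v) r).le
  calc LamK w d r α (fun i v => if ℓ v = i then (1 : ℝ) else 0)
      ≤ ∑ i, relaxedEnergy w d r α (fun v => if ℓ v = i then 1 else 0) (ψ i) :=
        sum_le_sum fun i _ => lamAlpha_le_relaxedEnergy hnn hd hα.le
          (fun v => by dsimp only; split_ifs <;> norm_num) (hψnorm i)
    _ ≤ ∑ i, relaxedEnergy w d r α (Φ i) (ψ i) := by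
        simp only [relaxedEnergy, sum_add_distrib, ← mul_sum]
        exact add_le_add_right (mul_le_mul_of_nonneg_left
          (sum_penalty_le_of_argmax hd hΦ (fun i v => (hψpos i v).le) hargmax) hα.le) _
    _ = LamK w d r α Φ := sum_congr rfl fun i _ => hψmin i

/-- one iteration of the rearrangement algorithm does not increase the
relaxed energy `Λ^α_k`. -/
theorem rearrangement_step_decreases
    (n k : ℕ) (hk : 0 < k)
    (w : Fin n → Fin n → ℝ)
    (hsym : ∀ i j, w i j = w j i) (hnn : ∀ i j, 0 ≤ w i j)
    (r : ℝ) (hr : r ∈ Set.Icc (0 : ℝ) 1)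
    (d : Fin n → ℝ) (hd : ∀ i, d i = ∑ j, w i j) (hdpos : ∀ i, 0 < d i)
    (α : ℝ) (hα : 0 < α)
    (Φ : Fin k → Fin n → ℝ) (hΦ : memA Φ)
    (ψ : Fin k → Fin n → ℝ)
    (hψpos : ∀ i v, 0 < ψ i v)
    (hψnorm : ∀ i, dnorm d r (ψ i) = 1)
    (hψmin : ∀ i, gradE w (ψ i)
      + α * ∑ v, Real.rpow (d v) r * (1 - Φ i v) * ψ i v ^ 2 = lamAlpha w d r α (Φ i))
    (ℓ : Fin n → Fin k) (hargmax : ∀ v j, ψ j v ≤ ψ (ℓ v) v) :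
    LamK w d r α (fun i v => if ℓ v = i then (1 : ℝ) else 0) ≤ LamK w d r α Φ :=
  rearrangement_step_decreases_general n k w hnn r d hdpos α hα Φ hΦ ψ hψpos hψnorm hψmin ℓ hargmax
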